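/- Let X be a measurable space, P^S and P^T mutually absolutely continuous probability measures on X. For y ∈ {0,1} let π_y(x) ∈ [0,1] be the true test conditional label probabilities with π_0(x) + π_1(x) = 1, and let p_y(x) ∈ (0,1) be model prediction probabilities with p_0(x) + p_1(x) = 1. Assume π_y(x) ≤ ε · p_y(x) for both y, P^T-a.e. Then E_{P^T}[ Σ_y −π_y log p_y ] ≤ E_{P^S}[ Σ_y −π_y log p_y ] + ε · E_{P^T}[ e^{−dP^S/dP^T} · H(x) ], where H(x) = Σ_y −p_y(x) log p_y(x), assuming all expectations are finite. -/
import Mathlib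


open MeasureTheory

/-- Theorem 1 of the paper: under covariate shift, the test cross-entropy risk is
upper-bounded by the training risk plus an `ε`-scaled weighted entropy term with
weights `e^{−dP^S/dP^T}`. -/
theorem weighted_entropy_bound {X : Type*} [MeasurableSpace X]
    (PS PT : Measure X) [IsProbabilityMeasure PS] [IsProbabilityMeasure PT]
    (hST : PS ≪ PT) (hTS : PT ≪ PS)
    (π₀ π₁ p₀ p₁ : X → ℝ)
    (hπ₀ : ∀ x, π₀ x ∈ Set.Icc (0 : ℝ) 1) (hπ₁ : ∀ x, π₁ x ∈ Set.Icc (0 : ℝ) 1)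
    (hπsum : ∀ x, π₀ x + π₁ x = 1)
    (hp₀ : ∀ x, p₀ x ∈ Set.Ioo (0 : ℝ) 1) (hp₁ : ∀ x, p₁ x ∈ Set.Ioo (0 : ℝ) 1)
    (hpsum : ∀ x, p₀ x + p₁ x = 1)
    (hπ₀m : Measurable π₀) (hπ₁m : Measurable π₁)
    (hp₀m : Measurable p₀) (hp₁m : Measurable p₁)
    (ε : ℝ)
    (hε : ∀ᵐ x ∂PT, π₀ x ≤ ε * p₀ x ∧ π₁ x ≤ ε * p₁ x)
    -- the cross-entropy loss and the weighted entropy term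
    (L : X → ℝ) (hL : L = fun x => -(π₀ x * Real.log (p₀ x)) - π₁ x * Real.log (p₁ x))
    (H : X → ℝ) (hH : H = fun x => -(p₀ x * Real.log (p₀ x)) - p₁ x * Real.log (p₁ x))
    -- all expectations are assumed finite
    (hLT : Integrable L PT) (hLS : Integrable L PS)
    (hWH : Integrable (fun x => Real.exp (-(PS.rnDeriv PT x).toReal) * H x) PT) :
    ∫ x, L x ∂PT ≤ ∫ x, L x ∂PS
      + ε * ∫ x, Real.exp (-(PS.rnDeriv PT x).toReal) * H x ∂PT := by
  set w : X → ℝ := fun x => (PS.rnDeriv PT x).toReal with hw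
  -- ∫ L dPS = ∫ w • L dPT
  have hint : ∫ x, L x ∂PS = ∫ x, w x • L x ∂PT :=
    (integral_rnDeriv_smul hST).symm
  have hwL : Integrable (fun x => w x • L x) PT :=
    (integrable_rnDeriv_smul_iff hST).mpr hLS
  -- pointwise facts
  have hlog₀ : ∀ x, Real.log (p₀ x) ≤ 0 := fun x =>
    Real.log_nonpos (hp₀ x).1.le (hp₀ x).2.le
  have hlog₁ : ∀ x, Real.log (p₁ x) ≤ 0 := fun x =>
    Real.log_nonpos (hp₁ x).1.le (hp₁ x).2.le
  have hLnn : ∀ x, 0 ≤ L x := by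
    intro x
    rw [hL]
    have := mul_nonpos_of_nonneg_of_nonpos (hπ₀ x).1 (hlog₀ x)
    have := mul_nonpos_of_nonneg_of_nonpos (hπ₁ x).1 (hlog₁ x)
    dsimp only
    linarith
  have hHnn : ∀ x, 0 ≤ H x := by
    intro x
    rw [hH]
    have := mul_nonpos_of_nonneg_of_nonpos (hp₀ x).1.le (hlog₀ x)
    have := mul_nonpos_of_nonneg_of_nonpos (hp₁ x).1.le (hlog₁ x)
    dsimp only
    linarith
  -- key a.e. pointwise inequality : L x - w x * L x ≤ ε * (exp (-w x) * H x)
  have key : ∀ᵐ x ∂PT, L x - w x • L x ≤ ε * (Real.exp (-w x) * H x) := by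
    filter_upwards [hε] with x hx
    have hLεH : L x ≤ ε * H x := by
      rw [hL, hH]
      dsimp only
      have h0 := mul_le_mul_of_nonpos_right hx.1 (hlog₀ x)
      have h1 := mul_le_mul_of_nonpos_right hx.2 (hlog₁ x)
      nlinarith [h0, h1]
    have h1w : 1 - w x ≤ Real.exp (-w x) := by
      have := Real.add_one_le_exp (-w x)
      linarith
    have hwnn : 0 ≤ w x := ENNReal.toReal_nonneg
    have hεHnn : 0 ≤ ε * H x := le_trans (hLnn x) hLεH
    calc L x - w x • L x = L x * (1 - w x) := by rw [smul_eq_mul]; ring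
      _ ≤ L x * Real.exp (-w x) := mul_le_mul_of_nonneg_left h1w (hLnn x)
      _ ≤ (ε * H x) * Real.exp (-w x) :=
          mul_le_mul_of_nonneg_right hLεH (Real.exp_nonneg _)
      _ = ε * (Real.exp (-w x) * H x) := by ring
  have hsub : Integrable (fun x => L x - w x • L x) PT := hLT.sub hwL
  have hrhs : Integrable (fun x => ε * (Real.exp (-w x) * H x)) PT := hWH.const_mul ε
  have := integral_mono_ae hsub hrhs key
  rw [integral_sub hLT hwL, integral_const_mul] at this
  rw [hint]
  linarith
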